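/- arXiv:1801.08256 — 3 statements merged into one kernel-verified Lean document; each statement's English description precedes it below -/
import Mathlib

section
/- With vector addition ⊕ and scalar multiplication ⊙, the set P_n of strictly positive probability vectors is a vector space over ℝ. -/
open Real BigOperators Finset Filter

def IsPosProb {n : ℕ} (p : Fin n → ℝ) : Prop :=
  (∀ i, 0 < p i) ∧ ∑ i, p i = 1

noncomputable def oplus {n : ℕ} (p q : Fin n → ℝ) : Fin n → ℝ :=
  fun i => p i * q i / ∑ j, p j * q j

noncomputable def odot {n : ℕ} (α : ℝ) (p : Fin n → ℝ) : Fin n → ℝ :=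
  fun i => p i ^ α / ∑ j, p j ^ α

noncomputable def unif (n : ℕ) : Fin n → ℝ := fun _ => 1 / n

noncomputable def logIP {n : ℕ} (p q : Fin n → ℝ) : ℝ :=
  ∑ i : Fin (n - 1),
    Real.log (p ⟨i.val, by have := i.isLt; omega⟩ / p ⟨i.val + 1, by have := i.isLt; omega⟩) *
    Real.log (q ⟨i.val, by have := i.isLt; omega⟩ / q ⟨i.val + 1, by have := i.isLt; omega⟩)

noncomputable def logNorm {n : ℕ} (p : Fin n → ℝ) : ℝ := Real.sqrt (logIP p p)

noncomputable def psub {n : ℕ} (p q : Fin n → ℝ) : Fin n → ℝ := oplus p (odot (-1) q)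


/-!
Every operation is "multiply (or raise to a power) coordinatewise, then rescale to total mass one".
Rescaling by a nonzero constant does not change the normalized vector, so all intermediate
normalizations can be dropped and each axiom reduces to the corresponding identity for
coordinatewise products and real powers of positive vectors.
-/

section Normalize

variable {ι : Type*} [Fintype ι]

noncomputable def normalizeSum (u : ι → ℝ) : ι → ℝ := fun i => u i / ∑ j, u j

theorem normalizeSum_smul (u : ι → ℝ) {c : ℝ} (hc : c ≠ 0) :
    normalizeSum (c • u) = normalizeSum u := by
  funext i
  simp only [normalizeSum, Pi.smul_apply, smul_eq_mul, ← Finset.mul_sum]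
  exact mul_div_mul_left _ _ hc

theorem normalizeSum_of_sum_eq_one {u : ι → ℝ} (hu : ∑ i, u i = 1) : normalizeSum u = u := by
  funext i
  rw [normalizeSum, hu, div_one]

theorem sum_normalizeSum {u : ι → ℝ} (hu : ∑ i, u i ≠ 0) : ∑ i, normalizeSum u i = 1 := by
  simp only [normalizeSum]
  rw [← Finset.sum_div, div_self hu]

theorem normalizeSum_mul_left (u v : ι → ℝ) (hu : ∑ i, u i ≠ 0) :
    normalizeSum (normalizeSum u * v) = normalizeSum (u * v) := by
  have h : normalizeSum u * v = (∑ i, u i)⁻¹ • (u * v) := by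
    funext i
    simp only [normalizeSum, Pi.mul_apply, Pi.smul_apply, smul_eq_mul]
    ring
  rw [h, normalizeSum_smul _ (inv_ne_zero hu)]

theorem normalizeSum_mul_right (u v : ι → ℝ) (hv : ∑ i, v i ≠ 0) :
    normalizeSum (u * normalizeSum v) = normalizeSum (u * v) := by
  rw [mul_comm, normalizeSum_mul_left _ _ hv, mul_comm]

theorem normalizeSum_rpow (u : ι → ℝ) (hu : ∀ i, 0 ≤ u i) (hs : 0 < ∑ i, u i) (α : ℝ) :
    normalizeSum (normalizeSum u ^ α) = normalizeSum (u ^ α) := by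
  have h : normalizeSum u ^ α = ((∑ i, u i) ^ α)⁻¹ • u ^ α := by
    funext i
    simp only [normalizeSum, Pi.pow_apply, Pi.smul_apply, smul_eq_mul, Real.div_rpow (hu i) hs.le]
    ring
  rw [h, normalizeSum_smul _ (inv_ne_zero (Real.rpow_pos_of_pos hs α).ne')]

theorem sum_pos_of_forall_pos [Nonempty ι] {u : ι → ℝ} (hu : ∀ i, 0 < u i) :
    0 < ∑ i, u i :=
  Finset.sum_pos (fun i _ => hu i) Finset.univ_nonempty

end Normalize

section PosProb

variable {n : ℕ}

theorem oplus_eq_normalizeSum (p q : Fin n → ℝ) : oplus p q = normalizeSum (p * q) := rfl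

theorem odot_eq_normalizeSum (α : ℝ) (p : Fin n → ℝ) : odot α p = normalizeSum (p ^ α) := rfl

theorem isPosProb_normalizeSum [Nonempty (Fin n)] {u : Fin n → ℝ} (hu : ∀ i, 0 < u i) :
    IsPosProb (normalizeSum u) :=
  ⟨fun i => div_pos (hu i) (sum_pos_of_forall_pos hu),
    sum_normalizeSum (sum_pos_of_forall_pos hu).ne'⟩

theorem IsPosProb.nonempty {p : Fin n → ℝ} (hp : IsPosProb p) : Nonempty (Fin n) := by
  by_contra h
  rw [not_nonempty_iff] at h
  simpa using hp.2

theorem IsPosProb.rpow_pos {p : Fin n → ℝ} (hp : IsPosProb p) (α : ℝ) (i : Fin n) :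
    0 < (p ^ α) i :=
  Real.rpow_pos_of_pos (hp.1 i) α

theorem IsPosProb.sum_rpow_pos {p : Fin n → ℝ} (hp : IsPosProb p) (α : ℝ) : 0 < ∑ i, (p ^ α) i :=
  have := hp.nonempty
  sum_pos_of_forall_pos (hp.rpow_pos α)

theorem IsPosProb.sum_mul_pos {p q : Fin n → ℝ} (hp : IsPosProb p) (hq : IsPosProb q) :
    0 < ∑ i, (p * q) i :=
  have := hp.nonempty
  sum_pos_of_forall_pos fun i => mul_pos (hp.1 i) (hq.1 i)

theorem IsPosProb.oplus {p q : Fin n → ℝ} (hp : IsPosProb p) (hq : IsPosProb q) :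
    IsPosProb (oplus p q) :=
  have := hp.nonempty
  isPosProb_normalizeSum fun i => mul_pos (hp.1 i) (hq.1 i)

theorem oplus_comm (p q : Fin n → ℝ) : oplus p q = oplus q p := by
  rw [oplus_eq_normalizeSum, mul_comm, ← oplus_eq_normalizeSum]

theorem oplus_assoc {p q r : Fin n → ℝ} (hp : IsPosProb p) (hq : IsPosProb q) (hr : IsPosProb r) :
    oplus (oplus p q) r = oplus p (oplus q r) := by
  simp only [oplus_eq_normalizeSum]
  rw [normalizeSum_mul_left _ _ (hp.sum_mul_pos hq).ne',
    normalizeSum_mul_right _ _ (hq.sum_mul_pos hr).ne', mul_assoc]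

theorem isPosProb_unif (hn : 0 < n) : IsPosProb (unif n) := by
  have hnR : (0 : ℝ) < n := Nat.cast_pos.mpr hn
  refine ⟨fun _ => div_pos one_pos hnR, ?_⟩
  simp [unif, hnR.ne']

theorem normalizeSum_one : normalizeSum (1 : Fin n → ℝ) = unif n := by
  funext i
  simp [normalizeSum, unif]

theorem oplus_unif {p : Fin n → ℝ} (hp : IsPosProb p) : oplus p (unif n) = p := by
  have hn : (n : ℝ) ≠ 0 := Nat.cast_ne_zero.mpr (Fin.pos_iff_nonempty.mpr hp.nonempty).ne'
  have h : p * unif n = (n : ℝ)⁻¹ • p := by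
    funext i
    simp [unif, mul_comm]
  rw [oplus_eq_normalizeSum, h, normalizeSum_smul _ (inv_ne_zero hn),
    normalizeSum_of_sum_eq_one hp.2]

theorem oplus_odot_neg_one {p : Fin n → ℝ} (hp : IsPosProb p) :
    oplus p (odot (-1) p) = unif n := by
  have h : p * p ^ (-1 : ℝ) = 1 := by
    funext i
    simp [Real.rpow_neg_one, (hp.1 i).ne']
  rw [oplus_eq_normalizeSum, odot_eq_normalizeSum,
    normalizeSum_mul_right _ _ (hp.sum_rpow_pos _).ne', h, normalizeSum_one]

theorem IsPosProb.odot {p : Fin n → ℝ} (hp : IsPosProb p) (α : ℝ) : IsPosProb (odot α p) :=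
  have := hp.nonempty
  isPosProb_normalizeSum (hp.rpow_pos α)

theorem odot_one {p : Fin n → ℝ} (hp : IsPosProb p) : odot 1 p = p := by
  have h : p ^ (1 : ℝ) = p := funext fun i => Real.rpow_one (p i)
  rw [odot_eq_normalizeSum, h, normalizeSum_of_sum_eq_one hp.2]

theorem odot_mul (α β : ℝ) {p : Fin n → ℝ} (hp : IsPosProb p) :
    odot (α * β) p = odot α (odot β p) := by
  have h : p ^ (α * β) = (p ^ β) ^ α := by
    funext i
    simp only [Pi.pow_apply, mul_comm α β, Real.rpow_mul (hp.1 i).le]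
  rw [odot_eq_normalizeSum, odot_eq_normalizeSum, odot_eq_normalizeSum,
    normalizeSum_rpow _ (fun i => (hp.rpow_pos β i).le) (hp.sum_rpow_pos β), h]

theorem odot_oplus (α : ℝ) {p q : Fin n → ℝ} (hp : IsPosProb p) (hq : IsPosProb q) :
    odot α (oplus p q) = oplus (odot α p) (odot α q) := by
  have h : (p * q) ^ α = p ^ α * q ^ α := by
    funext i
    exact Real.mul_rpow (hp.1 i).le (hq.1 i).le
  simp only [oplus_eq_normalizeSum, odot_eq_normalizeSum]
  rw [normalizeSum_rpow (p * q) (fun i => (mul_pos (hp.1 i) (hq.1 i)).le) (hp.sum_mul_pos hq),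
    normalizeSum_mul_left _ _ (hp.sum_rpow_pos α).ne',
    normalizeSum_mul_right _ _ (hq.sum_rpow_pos α).ne', h]

theorem odot_add (α β : ℝ) {p : Fin n → ℝ} (hp : IsPosProb p) :
    odot (α + β) p = oplus (odot α p) (odot β p) := by
  have h : p ^ (α + β) = p ^ α * p ^ β := by
    funext i
    exact Real.rpow_add (hp.1 i) α β
  simp only [oplus_eq_normalizeSum, odot_eq_normalizeSum]
  rw [normalizeSum_mul_left _ _ (hp.sum_rpow_pos α).ne',
    normalizeSum_mul_right _ _ (hp.sum_rpow_pos β).ne', h]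

end PosProb

theorem stmt11 {n : ℕ} (hn : 0 < n) :
    (∀ p q : Fin n → ℝ, IsPosProb p → IsPosProb q → IsPosProb (oplus p q)) ∧
    (∀ p q : Fin n → ℝ, IsPosProb p → IsPosProb q → oplus p q = oplus q p) ∧
    (∀ p q r : Fin n → ℝ, IsPosProb p → IsPosProb q → IsPosProb r →
      oplus (oplus p q) r = oplus p (oplus q r)) ∧
    (IsPosProb (unif n) ∧ ∀ p : Fin n → ℝ, IsPosProb p → oplus p (unif n) = p) ∧
    (∀ p : Fin n → ℝ, IsPosProb p → oplus p (odot (-1) p) = unif n) ∧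
    (∀ (α : ℝ) (p : Fin n → ℝ), IsPosProb p → IsPosProb (odot α p)) ∧
    (∀ p : Fin n → ℝ, IsPosProb p → odot 1 p = p) ∧
    (∀ (α β : ℝ) (p : Fin n → ℝ), IsPosProb p → odot (α * β) p = odot α (odot β p)) ∧
    (∀ (α : ℝ) (p q : Fin n → ℝ), IsPosProb p → IsPosProb q →
      odot α (oplus p q) = oplus (odot α p) (odot α q)) ∧
    (∀ (α β : ℝ) (p : Fin n → ℝ), IsPosProb p →
      odot (α + β) p = oplus (odot α p) (odot β p)) :=
  ⟨fun _ _ hp hq => hp.oplus hq, fun p q _ _ => oplus_comm p q,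
    fun _ _ _ hp hq hr => oplus_assoc hp hq hr, ⟨isPosProb_unif hn, fun _ hp => oplus_unif hp⟩,
    fun _ hp => oplus_odot_neg_one hp, fun α _ hp => hp.odot α, fun _ hp => odot_one hp,
    fun α β _ hp => odot_mul α β hp, fun α _ _ hp hq => odot_oplus α hp hq,
    fun α β _ hp => odot_add α β hp⟩
end

section
/- The map L : P_n → ℝ^{n-1} defined by L(p)_i = ln(p_i/p_{i+1}) is a linear isomorphism from (P_n, ⊕, ⊙) onto ℝ^{n-1} with its standard vector space structure, and the logarithmic inner product on P_n corresponds to the standard Euclidean inner product on ℝ^{n-1} under L. -/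
open Real BigOperators Finset Filter

noncomputable def Lmap {n : ℕ} (p : Fin n → ℝ) : Fin (n - 1) → ℝ :=
  fun i => Real.log (p ⟨i.val, by have := i.isLt; omega⟩ / p ⟨i.val + 1, by have := i.isLt; omega⟩)

lemma lmap_inj {n : ℕ} (hn : 0 < n) {p q : Fin n → ℝ} (hp : IsPosProb p) (hq : IsPosProb q)
    (h : Lmap p = Lmap q) : p = q := by
  obtain ⟨hp1, hp2⟩ := hp
  obtain ⟨hq1, hq2⟩ := hq
  have hrat : ∀ k : ℕ, ∀ hk : k + 1 < n,
      p ⟨k, by omega⟩ * q ⟨k+1, hk⟩ = q ⟨k, by omega⟩ * p ⟨k+1, hk⟩ := by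
    intro k hk
    have hk' : k < n - 1 := by omega
    have h0 := congrFun h ⟨k, hk'⟩
    simp only [Lmap] at h0
    have h1 : (0:ℝ) < p ⟨k, by omega⟩ / p ⟨k+1, hk⟩ := div_pos (hp1 _) (hp1 _)
    have h2 : (0:ℝ) < q ⟨k, by omega⟩ / q ⟨k+1, hk⟩ := div_pos (hq1 _) (hq1 _)
    have h3 := congrArg Real.exp h0
    rw [Real.exp_log h1, Real.exp_log h2] at h3
    exact (div_eq_div_iff (ne_of_gt (hp1 _)) (ne_of_gt (hq1 _))).mp h3
  have key : ∀ k : ℕ, ∀ hk : k < n,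
      p ⟨k, hk⟩ * q ⟨0, hn⟩ = q ⟨k, hk⟩ * p ⟨0, hn⟩ := by
    intro k
    induction k with
    | zero => intro hk; ring
    | succ m ih =>
      intro hk
      have hm : m < n := by omega
      have h1 := ih hm
      have h2 := hrat m hk
      have hpm : p ⟨m, hm⟩ ≠ 0 := ne_of_gt (hp1 _)
      have hqm : q ⟨m, hm⟩ ≠ 0 := ne_of_gt (hq1 _)
      have hmain : p ⟨m+1, hk⟩ * q ⟨0, hn⟩ * (p ⟨m, hm⟩ * q ⟨m, hm⟩)
          = q ⟨m+1, hk⟩ * p ⟨0, hn⟩ * (p ⟨m, hm⟩ * q ⟨m, hm⟩) := by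
        linear_combination (q ⟨m, hm⟩ * p ⟨m+1, hk⟩) * h1 - (q ⟨m, hm⟩ * p ⟨0, hn⟩) * h2
      exact mul_right_cancel₀ (mul_ne_zero hpm hqm) hmain
  have hsum : ∑ i : Fin n, p i * q ⟨0, hn⟩ = ∑ i : Fin n, q i * p ⟨0, hn⟩ := by
    refine Finset.sum_congr rfl fun i _ => ?_
    have := key i.val i.isLt
    simpa using this
  rw [← Finset.sum_mul, ← Finset.sum_mul, hp2, hq2, one_mul, one_mul] at hsum
  funext i
  have := key i.val i.isLt
  simp only [Fin.eta] at this
  rw [hsum] at this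
  exact mul_right_cancel₀ (ne_of_gt (hp1 ⟨0, hn⟩)) this

theorem stmt14 {n : ℕ} (hn : 0 < n) :
    (∀ p q : Fin n → ℝ, IsPosProb p → IsPosProb q → Lmap (oplus p q) = Lmap p + Lmap q) ∧
    (∀ (α : ℝ) (p : Fin n → ℝ), IsPosProb p → Lmap (odot α p) = α • Lmap p) ∧
    (∀ v : Fin (n - 1) → ℝ, ∃! p : Fin n → ℝ, IsPosProb p ∧ Lmap p = v) ∧
    (∀ p q : Fin n → ℝ, IsPosProb p → IsPosProb q →
      logIP p q = ∑ i, Lmap p i * Lmap q i) := by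
  refine ⟨?_, ?_, ?_, ?_⟩
  · -- additivity
    intro p q hp hq
    obtain ⟨hp1, _⟩ := hp
    obtain ⟨hq1, _⟩ := hq
    have hS : 0 < ∑ j, p j * q j :=
      Finset.sum_pos (fun j _ => mul_pos (hp1 j) (hq1 j)) ⟨⟨0, hn⟩, Finset.mem_univ _⟩
    funext i
    simp only [Lmap, oplus, Pi.add_apply]
    have hratio : p ⟨i.val, by have := i.isLt; omega⟩ * q ⟨i.val, by have := i.isLt; omega⟩ /
        (∑ j, p j * q j) / (p ⟨i.val + 1, by have := i.isLt; omega⟩ *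
        q ⟨i.val + 1, by have := i.isLt; omega⟩ / (∑ j, p j * q j)) =
        (p ⟨i.val, by have := i.isLt; omega⟩ / p ⟨i.val + 1, by have := i.isLt; omega⟩) *
        (q ⟨i.val, by have := i.isLt; omega⟩ / q ⟨i.val + 1, by have := i.isLt; omega⟩) := by
      field_simp
    rw [hratio, Real.log_mul (ne_of_gt (div_pos (hp1 _) (hp1 _)))
      (ne_of_gt (div_pos (hq1 _) (hq1 _)))]
  · -- scaling
    intro α p hp
    obtain ⟨hp1, _⟩ := hp
    have hT : 0 < ∑ j, p j ^ α :=
      Finset.sum_pos (fun j _ => Real.rpow_pos_of_pos (hp1 j) α) ⟨⟨0, hn⟩, Finset.mem_univ _⟩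
    funext i
    simp only [Lmap, odot, Pi.smul_apply, smul_eq_mul]
    have hratio : p ⟨i.val, by have := i.isLt; omega⟩ ^ α / (∑ j, p j ^ α) /
        (p ⟨i.val + 1, by have := i.isLt; omega⟩ ^ α / (∑ j, p j ^ α)) =
        (p ⟨i.val, by have := i.isLt; omega⟩ / p ⟨i.val + 1, by have := i.isLt; omega⟩) ^ α := by
      rw [div_div_div_cancel_right₀ (ne_of_gt hT),
        Real.div_rpow (le_of_lt (hp1 _)) (le_of_lt (hp1 _))]
    rw [hratio, Real.log_rpow (div_pos (hp1 _) (hp1 _))]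
  · -- bijectivity
    intro v
    set g : Fin n → ℝ := fun k =>
      Real.exp (∑ j ∈ Finset.univ.filter (fun j : Fin (n-1) => k.val ≤ j.val), v j) with hg
    have hSpos : 0 < ∑ m, g m :=
      Finset.sum_pos (fun m _ => Real.exp_pos _) ⟨⟨0, hn⟩, Finset.mem_univ _⟩
    have hpos : IsPosProb (fun k => g k / ∑ m, g m) := by
      refine ⟨fun k => div_pos (Real.exp_pos _) hSpos, ?_⟩
      rw [← Finset.sum_div, div_self (ne_of_gt hSpos)]
    have hL : Lmap (fun k => g k / ∑ m, g m) = v := by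
      funext i
      simp only [Lmap]
      have hratio : g ⟨i.val, by have := i.isLt; omega⟩ / (∑ m, g m) /
          (g ⟨i.val + 1, by have := i.isLt; omega⟩ / (∑ m, g m)) =
          g ⟨i.val, by have := i.isLt; omega⟩ / g ⟨i.val + 1, by have := i.isLt; omega⟩ :=
        div_div_div_cancel_right₀ (ne_of_gt hSpos) _ _
      rw [hratio, hg]
      simp only
      rw [← Real.exp_sub, Real.log_exp]
      have hset : Finset.univ.filter (fun j : Fin (n-1) => (i:ℕ) ≤ j.val) =
          insert i (Finset.univ.filter (fun j : Fin (n-1) => (i:ℕ) + 1 ≤ j.val)) := by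
        ext j
        simp [Fin.ext_iff]
        omega
      have hnotmem : i ∉ Finset.univ.filter (fun j : Fin (n-1) => (i:ℕ) + 1 ≤ j.val) := by
        simp
      rw [hset, Finset.sum_insert hnotmem]
      ring
    exact ⟨fun k => g k / ∑ m, g m, ⟨hpos, hL⟩,
      fun y hy => lmap_inj hn hy.1 hpos (hy.2.trans hL.symm)⟩
  · intro p q _ _
    rfl
end

section
/- If a sequence of strictly positive probability vectors p^(k) ∈ P_n converges (in the Euclidean sense) to a probability vector q having at least one zero entry, then ‖p^(k)‖ → ∞ in the norm induced by the logarithmic inner product, and consequently (p^(k)) is not Cauchy with respect to that norm. -/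
open Real BigOperators Finset Filter

/-!
The map `p ↦ (log (p j / p (j + 1)))_j` is an isometry of `P_n` with the log norm onto
Euclidean space `ℝ^(n-1)`, turning `psub` into subtraction. Since `q` has a zero and a nonzero
entry, some adjacent pair `q j, q (j + 1)` has exactly one zero, so the `j`-th coordinate
`log (p j / p (j + 1))` of the image of `p^(k)` diverges and the norm tends to infinity.
A Cauchy sequence in Euclidean space converges, so its norm stays bounded.
-/

namespace Fin

variable {n : ℕ}

def adjLeft (j : Fin (n - 1)) : Fin n := ⟨j, Nat.lt_of_lt_pred j.isLt⟩

def adjRight (j : Fin (n - 1)) : Fin n := ⟨j + 1, by have := j.isLt; omega⟩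

theorem exists_adj_not_iff {P : Fin n → Prop} {a b : Fin n} (ha : P a) (hb : ¬ P b) :
    ∃ j : Fin (n - 1), ¬ (P j.adjLeft ↔ P j.adjRight) := by
  by_contra! hadj
  have hn : 0 < n := a.pos
  have hP : ∀ m (hm : m < n), P ⟨m, hm⟩ ↔ P ⟨0, hn⟩ := by
    intro m
    induction m with
    | zero => exact fun _ => Iff.rfl
    | succ m ih => exact fun hm => (hadj ⟨m, by omega⟩).symm.trans (ih (by omega))
  exact hb ((hP b b.isLt).2 ((hP a a.isLt).1 ha))

end Fin

section LogCoordinates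

variable {n : ℕ}

noncomputable def logVec (p : Fin n → ℝ) : EuclideanSpace ℝ (Fin (n - 1)) :=
  WithLp.toLp 2 fun j => log (p j.adjLeft / p j.adjRight)

theorem logVec_apply (p : Fin n → ℝ) (j : Fin (n - 1)) :
    logVec p j = log (p j.adjLeft / p j.adjRight) := rfl

theorem logNorm_eq_norm_logVec (p : Fin n → ℝ) : logNorm p = ‖logVec p‖ := by
  rw [EuclideanSpace.norm_eq, logNorm, logIP]
  congr 1
  refine Finset.sum_congr rfl fun j _ => ?_
  rw [Real.norm_eq_abs, sq_abs, sq]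
  rfl

theorem psub_div_psub {p q : Fin n → ℝ} (hp : ∀ i, 0 < p i) (hq : ∀ i, 0 < q i)
    (a b : Fin n) :
    psub p q a / psub p q b = (p a / p b) / (q a / q b) := by
  have : Nonempty (Fin n) := ⟨a⟩
  have hsum_inv : 0 < ∑ j, (q j)⁻¹ :=
    Finset.sum_pos (fun j _ => inv_pos.2 (hq j)) univ_nonempty
  have hsum : 0 < ∑ j, p j * odot (-1) q j := by
    refine Finset.sum_pos (fun j _ => mul_pos (hp j) ?_) univ_nonempty
    simp only [odot, rpow_neg_one]
    exact div_pos (inv_pos.2 (hq j)) hsum_inv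
  simp only [psub, oplus]
  rw [div_div_div_cancel_right₀ hsum.ne']
  simp only [odot, rpow_neg_one]
  rw [mul_div_assoc', mul_div_assoc', div_div_div_cancel_right₀ hsum_inv.ne']
  have := (hp b).ne'
  have := (hq a).ne'
  have := (hq b).ne'
  field_simp

theorem logVec_psub {p q : Fin n → ℝ} (hp : ∀ i, 0 < p i) (hq : ∀ i, 0 < q i) :
    logVec (psub p q) = logVec p - logVec q := by
  ext j
  simp only [PiLp.sub_apply, logVec_apply, psub_div_psub hp hq]
  exact log_div (div_pos (hp _) (hp _)).ne' (div_pos (hq _) (hq _)).ne'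

theorem logNorm_psub {p q : Fin n → ℝ} (hp : ∀ i, 0 < p i) (hq : ∀ i, 0 < q i) :
    logNorm (psub p q) = dist (logVec p) (logVec q) := by
  rw [logNorm_eq_norm_logVec, logVec_psub hp hq, dist_eq_norm]

theorem abs_logVec_apply_le_logNorm (p : Fin n → ℝ) (j : Fin (n - 1)) :
    |logVec p j| ≤ logNorm p :=
  logNorm_eq_norm_logVec p ▸ PiLp.norm_apply_le (logVec p) j

end LogCoordinates

theorem tendsto_abs_log_div_atTop {ι : Type*} {l : Filter ι} {a b : ι → ℝ} {β : ℝ}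
    (ha : ∀ k, 0 < a k) (hb : ∀ k, 0 < b k) (ha0 : Tendsto a l (nhds 0))
    (hbβ : Tendsto b l (nhds β)) (hβ : β ≠ 0) :
    Tendsto (fun k => |log (a k / b k)|) l atTop := by
  have hdiv : Tendsto (fun k => a k / b k) l (nhdsWithin 0 (Set.Ioi 0)) := by
    refine tendsto_nhdsWithin_of_tendsto_nhds_of_eventually_within _ ?_
      (Eventually.of_forall fun k => div_pos (ha k) (hb k))
    exact zero_div β ▸ ha0.div hbβ hβ
  exact tendsto_abs_atBot_atTop.comp (tendsto_log_nhdsGT_zero.comp hdiv)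

theorem tendsto_abs_logVec_apply_atTop {n : ℕ} {ι : Type*} {l : Filter ι}
    {p : ι → Fin n → ℝ} {q : Fin n → ℝ} (hp : ∀ k i, 0 < p k i)
    (hconv : ∀ i, Tendsto (fun k => p k i) l (nhds (q i)))
    {j : Fin (n - 1)} (hj : ¬ (q j.adjLeft = 0 ↔ q j.adjRight = 0)) :
    Tendsto (fun k => |logVec (p k) j|) l atTop := by
  simp only [logVec_apply]
  by_cases hleft : q j.adjLeft = 0
  · have hright : q j.adjRight ≠ 0 := fun h => hj (iff_of_true hleft h)
    exact tendsto_abs_log_div_atTop (hp · _) (hp · _) (hleft ▸ hconv _) (hconv _) hright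
  · have hright : q j.adjRight = 0 := not_not.1 fun h => hj (iff_of_false hleft h)
    refine (tendsto_abs_log_div_atTop (hp · _) (hp · _) (hright ▸ hconv _) (hconv _)
      hleft).congr fun k => ?_
    rw [← inv_div, log_inv, abs_neg]

theorem stmt19_general {n : ℕ} (p : ℕ → Fin n → ℝ) (hp : ∀ k, IsPosProb (p k))
    (q : Fin n → ℝ) (hq1 : ∑ i, q i = 1)
    (i₀ : Fin n) (hzero : q i₀ = 0)
    (hconv : ∀ i, Filter.Tendsto (fun k => p k i) Filter.atTop (nhds (q i))) :
    Filter.Tendsto (fun k => logNorm (p k)) Filter.atTop Filter.atTop ∧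
    ¬ (∀ ε > 0, ∃ N : ℕ, ∀ m ≥ N, ∀ l ≥ N, logNorm (psub (p m) (p l)) < ε) := by
  have hpos k : ∀ i, 0 < p k i := (hp k).1
  obtain ⟨b, -, hb⟩ :=
    Finset.exists_ne_zero_of_sum_ne_zero (hq1 ▸ one_ne_zero : ∑ i, q i ≠ 0)
  obtain ⟨j, hj⟩ := Fin.exists_adj_not_iff (P := fun i => q i = 0) hzero hb
  have htend : Tendsto (fun k => logNorm (p k)) atTop atTop :=
    tendsto_atTop_mono (fun k => abs_logVec_apply_le_logNorm (p k) j)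
      (tendsto_abs_logVec_apply_atTop hpos hconv hj)
  refine ⟨htend, fun hsmall => ?_⟩
  have hcauchy : CauchySeq fun k => logVec (p k) :=
    Metric.cauchySeq_iff.2 fun ε hε => by
      simpa only [logNorm_psub (hpos _) (hpos _)] using hsmall ε hε
  obtain ⟨x, hx⟩ := cauchySeq_tendsto_of_complete hcauchy
  exact not_tendsto_atTop_of_tendsto_nhds hx.norm
    (by simpa only [logNorm_eq_norm_logVec] using htend)

theorem stmt19 {n : ℕ} (p : ℕ → Fin n → ℝ) (hp : ∀ k, IsPosProb (p k))
    (q : Fin n → ℝ) (hq0 : ∀ i, 0 ≤ q i) (hq1 : ∑ i, q i = 1)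
    (i₀ : Fin n) (hzero : q i₀ = 0)
    (hconv : ∀ i, Filter.Tendsto (fun k => p k i) Filter.atTop (nhds (q i))) :
    Filter.Tendsto (fun k => logNorm (p k)) Filter.atTop Filter.atTop ∧
    ¬ (∀ ε > 0, ∃ N : ℕ, ∀ m ≥ N, ∀ l ≥ N, logNorm (psub (p m) (p l)) < ε) :=
  stmt19_general p hp q hq1 i₀ hzero hconv
end
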